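/- arXiv:2005.07341 — 9 statements merged into one kernel-verified Lean document; each statement's English description precedes it below -/
import Mathlib

section
/- (Case 1 of OP_DES, slack constraint.) Let α∘ = (1/X)·(k_e/p_e − 1/b_e) and β∘ = (1/Y)·(k_h/p_h − 1/b_h). If 0 < α∘ < 1, 0 < β∘ < 1, and X·α∘ + Y·β∘ ≥ M_min, then (α∘, β∘) lies in the feasible set D and is the unique global maximizer of U on D: for every (α,β) ∈ D with (α,β) ≠ (α∘,β∘) one has U(α,β) < U(α∘,β∘). -/
/-- The DES utility function `U(α,β)` with adaption coefficients
`b_e = (e−1)/X`, `b_h = (e−1)/Y`. -/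
noncomputable def desU (X Y ke kh pe ph C0 : ℝ) (q : ℝ × ℝ) : ℝ :=
  ke * Real.log (1 + ((Real.exp 1 - 1) / X) * X * q.1)
  + kh * Real.log (1 + ((Real.exp 1 - 1) / Y) * Y * q.2)
  + pe * X * (1 - q.1) + ph * Y * (1 - q.2) - C0

/-- The feasible set `D` of the DES optimization problem. -/
def desD (X Y Mmin : ℝ) : Set (ℝ × ℝ) :=
  {q | q.1 ∈ Set.Icc (0:ℝ) 1 ∧ q.2 ∈ Set.Icc (0:ℝ) 1 ∧ X * q.1 + Y * q.2 ≥ Mmin}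

/-!
`U` is a constant plus a sum of two one-variable concave functions `t ↦ k log(1 + c t) − m t`
(with `c = e − 1`). The formulas for `α∘`, `β∘` say exactly that they are the stationary points
`m (1 + c t₀) = k c` of these functions, and the tangent-line inequality
`log x − log y ≤ (x − y) / y`, strict for `x ≠ y`, makes each stationary point a strict global
maximum on `t ≥ 0`. Since `(α∘, β∘)` is feasible, the constrained maximum is the unconstrained one.
-/

open Real

namespace DES

lemma log_sub_log_le {x y : ℝ} (hx : 0 < x) (hy : 0 < y) : log x - log y ≤ (x - y) / y := by
  rw [← log_div hx.ne' hy.ne', sub_div, div_self hy.ne']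
  exact log_le_sub_one_of_pos (div_pos hx hy)

lemma log_sub_log_lt {x y : ℝ} (hx : 0 < x) (hy : 0 < y) (hxy : x ≠ y) :
    log x - log y < (x - y) / y := by
  rw [← log_div hx.ne' hy.ne', sub_div, div_self hy.ne']
  exact log_lt_sub_one_of_pos (div_pos hx hy) (by rwa [ne_eq, div_eq_one_iff_eq hy.ne'])

variable {k c m t₀ t : ℝ}

lemma mul_sub_eq_of_stationary (h₀ : 0 < 1 + c * t₀) (hstat : m * (1 + c * t₀) = k * c) :
    m * (t - t₀) = k * ((1 + c * t - (1 + c * t₀)) / (1 + c * t₀)) := by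
  rw [mul_div_assoc', eq_div_iff h₀.ne']
  linear_combination (t - t₀) * hstat

lemma mul_log_sub_mul_le_of_stationary (hk : 0 ≤ k) (h₀ : 0 < 1 + c * t₀) (ht : 0 < 1 + c * t)
    (hstat : m * (1 + c * t₀) = k * c) :
    k * log (1 + c * t) - m * t ≤ k * log (1 + c * t₀) - m * t₀ := by
  have hlog := mul_le_mul_of_nonneg_left (log_sub_log_le ht h₀) hk
  have hlin := mul_sub_eq_of_stationary (t := t) h₀ hstat
  linarith

lemma mul_log_sub_mul_lt_of_stationary (hk : 0 < k) (hc : c ≠ 0) (h₀ : 0 < 1 + c * t₀)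
    (ht : 0 < 1 + c * t) (hstat : m * (1 + c * t₀) = k * c) (hne : t ≠ t₀) :
    k * log (1 + c * t) - m * t < k * log (1 + c * t₀) - m * t₀ := by
  have hxy : 1 + c * t ≠ 1 + c * t₀ := by simpa [hc] using hne
  have hlog := mul_lt_mul_of_pos_left (log_sub_log_lt ht h₀ hxy) hk
  have hlin := mul_sub_eq_of_stationary (t := t) h₀ hstat
  linarith

lemma exp_one_sub_one_pos : 0 < exp 1 - 1 := sub_pos.mpr (one_lt_exp_iff.mpr one_pos)

lemma desU_eq_sum {X Y : ℝ} (hX : X ≠ 0) (hY : Y ≠ 0) (ke kh pe ph C0 : ℝ) (q : ℝ × ℝ) :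
    desU X Y ke kh pe ph C0 q =
      (ke * log (1 + (exp 1 - 1) * q.1) - pe * X * q.1)
        + (kh * log (1 + (exp 1 - 1) * q.2) - ph * Y * q.2) + (pe * X + ph * Y - C0) := by
  rw [desU, div_mul_cancel₀ _ hX, div_mul_cancel₀ _ hY]
  ring

lemma stationary_of_eq {Z k p a : ℝ} (hZ : Z ≠ 0) (hp : p ≠ 0)
    (ha : a = (1 / Z) * (k / p - 1 / ((exp 1 - 1) / Z))) :
    p * Z * (1 + (exp 1 - 1) * a) = k * (exp 1 - 1) := by
  have hc := exp_one_sub_one_pos.ne'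
  subst ha
  field_simp
  ring

end DES

open DES

theorem stmt_1_general (X Y ke kh pe ph C0 Mmin αo βo : ℝ)
    (hX : 0 < X) (hY : 0 < Y) (hke : 0 < ke) (hkh : 0 < kh)
    (hpe : 0 < pe) (hph : 0 < ph)
    (hαo : αo = (1 / X) * (ke / pe - 1 / ((Real.exp 1 - 1) / X)))
    (hβo : βo = (1 / Y) * (kh / ph - 1 / ((Real.exp 1 - 1) / Y)))
    (hα1 : 0 < αo) (hα2 : αo < 1) (hβ1 : 0 < βo) (hβ2 : βo < 1)
    (hfeas : X * αo + Y * βo ≥ Mmin) :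
    (αo, βo) ∈ desD X Y Mmin ∧
      ∀ q ∈ desD X Y Mmin, q ≠ (αo, βo) →
        desU X Y ke kh pe ph C0 q < desU X Y ke kh pe ph C0 (αo, βo) := by
  refine ⟨⟨⟨hα1.le, hα2.le⟩, ⟨hβ1.le, hβ2.le⟩, hfeas⟩, ?_⟩
  rintro ⟨α, β⟩ ⟨⟨hα, -⟩, ⟨hβ, -⟩, -⟩ hne
  have hc := exp_one_sub_one_pos
  have hpos {t : ℝ} (ht : 0 ≤ t) : 0 < 1 + (exp 1 - 1) * t := by positivity
  have hstatα := stationary_of_eq hX.ne' hpe.ne' hαo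
  have hstatβ := stationary_of_eq hY.ne' hph.ne' hβo
  rw [desU_eq_sum hX.ne' hY.ne', desU_eq_sum hX.ne' hY.ne']
  dsimp only
  rcases not_and_or.mp (Prod.mk_inj.not.mp hne) with hα' | hβ'
  · linarith [mul_log_sub_mul_lt_of_stationary hke hc.ne' (hpos hα1.le) (hpos hα) hstatα hα',
      mul_log_sub_mul_le_of_stationary hkh.le (hpos hβ1.le) (hpos hβ) hstatβ]
  · linarith [mul_log_sub_mul_le_of_stationary hke.le (hpos hα1.le) (hpos hα) hstatα,
      mul_log_sub_mul_lt_of_stationary hkh hc.ne' (hpos hβ1.le) (hpos hβ) hstatβ hβ']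

/-- Case 1 of OP_DES, slack constraint: the stationary point `(α∘, β∘)`, when
interior and feasible, is the unique global maximizer of `U` on `D`. -/
theorem stmt_1 (X Y ke kh pe ph C0 Mmin αo βo : ℝ)
    (hX : 0 < X) (hY : 0 < Y) (hke : 0 < ke) (hkh : 0 < kh)
    (hpe : 0 < pe) (hph : 0 < ph)
    (hM : max X Y < Mmin) (hM' : Mmin < X + Y)
    (hαo : αo = (1 / X) * (ke / pe - 1 / ((Real.exp 1 - 1) / X)))
    (hβo : βo = (1 / Y) * (kh / ph - 1 / ((Real.exp 1 - 1) / Y)))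
    (hα1 : 0 < αo) (hα2 : αo < 1) (hβ1 : 0 < βo) (hβ2 : βo < 1)
    (hfeas : X * αo + Y * βo ≥ Mmin) :
    (αo, βo) ∈ desD X Y Mmin ∧
      ∀ q ∈ desD X Y Mmin, q ≠ (αo, βo) →
        desU X Y ke kh pe ph C0 q < desU X Y ke kh pe ph C0 (αo, βo) :=
  stmt_1_general X Y ke kh pe ph C0 Mmin αo βo hX hY hke hkh hpe hph hαo hβo hα1 hα2 hβ1 hβ2 hfeas
end

section
/- If c_e ≤ p_e ≤ r_e and r_e·X/(e−1) < k_e < c_e·X·e/(e−1), then the stationary dispatching factor α∘ = (1/X)·(k_e/p_e − 1/b_e) satisfies 0 < α∘ < 1. -/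
/-! For any adaption coefficient `b > 0` the factor `(1/X)·(k/p − 1/b)` lies in `(0, 1)` as soon as
`1/b < k/p < X + 1/b`; the lower bound follows from `r/b < k` and `p ≤ r`, the upper one from
`k < c·(X + 1/b)` and `c ≤ p`. For `b = (e−1)/X` these thresholds are `r·X/(e−1)` and `c·X·e/(e−1)`. -/

lemma dispatchingFactor_pos {X b k p r : ℝ} (hX : 0 < X) (hb : 0 < b) (hp : 0 < p)
    (hpr : p ≤ r) (hk : r / b < k) : 0 < 1 / X * (k / p - 1 / b) := by
  have hrk : r < k * b := (div_lt_iff₀ hb).mp hk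
  have hkp : 1 / b < k / p := by
    rw [div_lt_div_iff₀ hb hp]
    linarith
  exact mul_pos (one_div_pos.mpr hX) (sub_pos.mpr hkp)

lemma dispatchingFactor_lt_one {X b k p c : ℝ} (hX : 0 < X) (hb : 0 < b) (hc : 0 < c)
    (hcp : c ≤ p) (hk : k < c * (X + 1 / b)) : 1 / X * (k / p - 1 / b) < 1 := by
  have hXb : 0 < X + 1 / b := by positivity
  have hkp : k / p < X + 1 / b := by
    rw [div_lt_iff₀ (hc.trans_le hcp)]
    nlinarith
  calc 1 / X * (k / p - 1 / b) < 1 / X * X := by gcongr; linarith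
    _ = 1 := one_div_mul_cancel hX.ne'

theorem stmt_2_general (X ce re ke pe : ℝ)
    (hX : 0 < X) (hce : 0 < ce) (h1 : ce ≤ pe) (h2 : pe ≤ re)
    (h3 : re * X / (Real.exp 1 - 1) < ke)
    (h4 : ke < ce * X * Real.exp 1 / (Real.exp 1 - 1)) :
    0 < (1 / X) * (ke / pe - 1 / ((Real.exp 1 - 1) / X)) ∧
      (1 / X) * (ke / pe - 1 / ((Real.exp 1 - 1) / X)) < 1 := by
  have he : 0 < Real.exp 1 - 1 := sub_pos.mpr (Real.one_lt_exp_iff.mpr one_pos)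
  have hb : 0 < (Real.exp 1 - 1) / X := div_pos he hX
  refine ⟨dispatchingFactor_pos hX hb (hce.trans_le h1) h2 ?_,
    dispatchingFactor_lt_one hX hb hce h1 ?_⟩
  · rwa [div_div_eq_mul_div]
  · convert h4 using 1
    field_simp
    ring

/-- If `c_e ≤ p_e ≤ r_e` and `r_e·X/(e−1) < k_e < c_e·X·e/(e−1)`, then the
stationary dispatching factor `α∘ = (1/X)·(k_e/p_e − 1/b_e)` with
`b_e = (e−1)/X` satisfies `0 < α∘ < 1`. -/
theorem stmt_2 (X ce re ke pe : ℝ)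
    (hX : 0 < X) (hce : 0 < ce) (hcr : ce ≤ re) (hke : 0 < ke)
    (h1 : ce ≤ pe) (h2 : pe ≤ re)
    (h3 : re * X / (Real.exp 1 - 1) < ke)
    (h4 : ke < ce * X * Real.exp 1 / (Real.exp 1 - 1)) :
    0 < (1 / X) * (ke / pe - 1 / ((Real.exp 1 - 1) / X)) ∧
      (1 / X) * (ke / pe - 1 / ((Real.exp 1 - 1) / X)) < 1 :=
  stmt_2_general X ce re ke pe hX hce h1 h2 h3 h4
end

section
/- For a satisfaction coefficient k_e > 0 the following are equivalent: (i) for every price p with c_e ≤ p ≤ r_e one has 0 < (1/X)·(k_e/p − 1/b_e) < 1; (ii) r_e·X/(e−1) < k_e < c_e·X·e/(e−1). (In particular such a k_e can exist only when r_e < e·c_e.) -/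
open Real

lemma inv_mul_sub_mem_Ioo_iff {X p k c : ℝ} (hX : 0 < X) (hp : 0 < p) :
    (0 < (1 / X) * (k / p - c) ∧ (1 / X) * (k / p - c) < 1) ↔ p * c < k ∧ k < p * (X + c) := by
  rw [one_div, mul_pos_iff_of_pos_left (inv_pos.mpr hX), inv_mul_lt_iff₀ hX, mul_one,
    sub_pos, sub_lt_iff_lt_add', lt_div_iff₀ hp, div_lt_iff₀ hp, mul_comm c, add_comm c, mul_comm _ p]

lemma forall_Icc_mul_lt_and_lt_mul_iff {a b c d k : ℝ} (hab : a ≤ b) (hc : 0 ≤ c) (hd : 0 ≤ d) :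
    (∀ p, a ≤ p → p ≤ b → p * c < k ∧ k < p * d) ↔ b * c < k ∧ k < a * d := by
  refine ⟨fun h => ⟨(h b hab le_rfl).1, (h a le_rfl hab).2⟩, fun ⟨hb, ha⟩ p hap hpb => ⟨?_, ?_⟩⟩
  · calc p * c ≤ b * c := mul_le_mul_of_nonneg_right hpb hc
      _ < k := hb
  · calc k < a * d := ha
      _ ≤ p * d := mul_le_mul_of_nonneg_right hap hd

theorem stmt_3_general (X ce re ke : ℝ)
    (hX : 0 < X) (hce : 0 < ce) (hcr : ce ≤ re) :
    (∀ p : ℝ, ce ≤ p → p ≤ re →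
        0 < (1 / X) * (ke / p - 1 / ((Real.exp 1 - 1) / X)) ∧
        (1 / X) * (ke / p - 1 / ((Real.exp 1 - 1) / X)) < 1) ↔
      (re * X / (Real.exp 1 - 1) < ke ∧
        ke < ce * X * Real.exp 1 / (Real.exp 1 - 1)) := by
  have he : 0 < exp 1 - 1 := sub_pos.mpr (one_lt_exp_iff.mpr one_pos)
  have hc : 0 < 1 / ((exp 1 - 1) / X) := by positivity
  have hlower (p : ℝ) : p * (1 / ((exp 1 - 1) / X)) = p * X / (exp 1 - 1) := by
    field_simp
  have hupper (p : ℝ) : p * (X + 1 / ((exp 1 - 1) / X)) = p * X * exp 1 / (exp 1 - 1) := by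
    field_simp; ring
  calc _ ↔ ∀ p, ce ≤ p → p ≤ re →
        p * (1 / ((exp 1 - 1) / X)) < ke ∧ ke < p * (X + 1 / ((exp 1 - 1) / X)) :=
        forall_congr' fun p => forall_congr' fun hp => imp_congr_right fun _ =>
          inv_mul_sub_mem_Ioo_iff hX (hce.trans_le hp)
    _ ↔ _ := by
      rw [forall_Icc_mul_lt_and_lt_mul_iff hcr hc.le (by positivity), hlower, hupper]

/-- For a satisfaction coefficient `k_e > 0`, the interior-response condition
holds for every admissible price iff `r_e·X/(e−1) < k_e < c_e·X·e/(e−1)`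
(with `b_e = (e−1)/X`). -/
theorem stmt_3 (X ce re ke : ℝ)
    (hX : 0 < X) (hce : 0 < ce) (hcr : ce ≤ re) (hke : 0 < ke) :
    (∀ p : ℝ, ce ≤ p → p ≤ re →
        0 < (1 / X) * (ke / p - 1 / ((Real.exp 1 - 1) / X)) ∧
        (1 / X) * (ke / p - 1 / ((Real.exp 1 - 1) / X)) < 1) ↔
      (re * X / (Real.exp 1 - 1) < ke ∧
        ke < ce * X * Real.exp 1 / (Real.exp 1 - 1)) :=
  stmt_3_general X ce re ke hX hce hcr
end

section
/- (Infeasibility of Case 4.) Assume c_e ≤ p_e, c_h ≤ p_h, k_e < c_e·X·e/(e−1) and k_h < c_h·Y·e/(e−1). Then (1,1) is not a maximizer of U on the feasible set D: there exists (α,β) ∈ D with U(α,β) > U(1,1). -/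
open Real Set Filter Topology

theorem HasDerivAt.eventually_nhdsLT_lt_of_neg {f : ℝ → ℝ} {f' a : ℝ} (hf : HasDerivAt f f' a)
    (hf' : f' < 0) : ∀ᶠ x in 𝓝[<] a, f a < f x := by
  have hslope : ∀ᶠ x in 𝓝[<] a, slope f a x < 0 :=
    (hasDerivAt_iff_tendsto_slope_left_right.mp hf).1.eventually_lt_const hf'
  filter_upwards [hslope, self_mem_nhdsWithin] with x hx hxa
  rw [slope_def_field, div_neg_iff] at hx
  have : x - a < 0 := sub_neg.mpr hxa
  rcases hx with h | h <;> linarith [h.1, h.2]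

theorem hasDerivAt_desU_fst {X : ℝ} (hX : X ≠ 0) (Y ke kh pe ph C0 β : ℝ) :
    HasDerivAt (fun α => desU X Y ke kh pe ph C0 (α, β))
      (ke * (exp 1 - 1) / exp 1 - pe * X) 1 := by
  have hlin : HasDerivAt (fun α : ℝ => 1 + (exp 1 - 1) * α) (exp 1 - 1) 1 := by
    simpa using ((hasDerivAt_id (1 : ℝ)).const_mul (exp 1 - 1)).const_add 1
  have hlog := hlin.log (by simp [(exp_pos 1).ne'])
  -- `desU X Y 0 kh 0 ph C0 (0, β)` collects the terms of `U` that do not involve `α`.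
  refine ((((hlog.const_mul ke).sub ((hasDerivAt_id' 1).const_mul (pe * X))).add_const
    (pe * X + desU X Y 0 kh 0 ph C0 (0, β))).congr_deriv ?_).congr_of_eventuallyEq
    (.of_forall fun α => ?_)
  · simp only [mul_one, add_sub_cancel]
    ring
  · simp only [desU, Pi.sub_apply, div_mul_cancel₀ _ hX]
    ring

theorem stmt_4_general (X Y ke kh pe ph ce C0 Mmin : ℝ)
    (hX : 0 < X) (hM' : Mmin < X + Y)
    (h1 : ce ≤ pe)
    (h3 : ke < ce * X * Real.exp 1 / (Real.exp 1 - 1)) :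
    ∃ q ∈ desD X Y Mmin,
      desU X Y ke kh pe ph C0 ((1:ℝ), (1:ℝ)) < desU X Y ke kh pe ph C0 q := by
  have hslope : ke * (exp 1 - 1) / exp 1 - pe * X < 0 := by
    have he : 0 < exp 1 - 1 := by linarith [add_one_lt_exp one_ne_zero]
    rw [lt_div_iff₀ he] at h3
    rw [sub_neg, div_lt_iff₀ (exp_pos 1)]
    calc ke * (exp 1 - 1) < ce * X * exp 1 := by linarith
      _ ≤ pe * X * exp 1 := by gcongr
  have hleft : (Mmin - Y) / X < 1 := by rw [div_lt_one hX]; linarith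
  obtain ⟨α, hU, hα0, hαM⟩ :=
    ((hasDerivAt_desU_fst hX.ne' Y ke kh pe ph C0 1).eventually_nhdsLT_lt_of_neg hslope).and
      (Eventually.and (Ioo_mem_nhdsLT zero_lt_one) (Ioo_mem_nhdsLT hleft)) |>.exists
  refine ⟨(α, 1), ⟨⟨hα0.1.le, hα0.2.le⟩, ⟨zero_le_one, le_rfl⟩, ?_⟩, hU⟩
  have := (div_lt_iff₀ hX).mp hαM.1
  dsimp only
  linarith

/-- Infeasibility of Case 4: under the stated price/coefficient bounds,
`(1,1)` is not a maximizer of `U` on `D`. -/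
theorem stmt_4 (X Y ke kh pe ph ce ch C0 Mmin : ℝ)
    (hX : 0 < X) (hY : 0 < Y) (hke : 0 < ke) (hkh : 0 < kh)
    (hpe : 0 < pe) (hph : 0 < ph) (hce : 0 < ce) (hch : 0 < ch)
    (hM : max X Y < Mmin) (hM' : Mmin < X + Y)
    (h1 : ce ≤ pe) (h2 : ch ≤ ph)
    (h3 : ke < ce * X * Real.exp 1 / (Real.exp 1 - 1))
    (h4 : kh < ch * Y * Real.exp 1 / (Real.exp 1 - 1)) :
    ∃ q ∈ desD X Y Mmin,
      desU X Y ke kh pe ph C0 ((1:ℝ), (1:ℝ)) < desU X Y ke kh pe ph C0 q :=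
  stmt_4_general X Y ke kh pe ph ce C0 Mmin hX hM' h1 h3
end

section
/- (Case 2 of OP_DES.) Let β∘ = (1/Y)·(k_h/p_h − 1/b_h). If k_e·b_e/(1 + b_e·X) ≥ p_e, 0 < β∘ < 1, and X + Y·β∘ ≥ M_min, then (1, β∘) is a global maximizer of U on the feasible set D: U(1, β∘) ≥ U(α,β) for all (α,β) ∈ D. -/
/-!
`U` is separable, and each coordinate contributes a term `t ↦ k log (1 + c t) + p (1 - t)`, which is
concave and therefore lies below its tangent at any point. At `β∘` the tangent is horizontal; at
`α = 1` its slope is nonnegative by the marginal condition, so on `α ≤ 1` it lies below the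
value at `1`.
-/

open Real

noncomputable def logUtility (k c p t : ℝ) : ℝ :=
  k * log (1 + c * t) + p * (1 - t)

section logUtility

variable {k c p t t₀ : ℝ}

theorem mul_log_le_tangent {a b : ℝ} (hk : 0 ≤ k) (ha : 0 < a) (hb : 0 < b) :
    k * log a ≤ k * log b + k / b * (a - b) := by
  have h := log_le_sub_one_of_pos (div_pos ha hb)
  rw [log_div ha.ne' hb.ne'] at h
  have h' : a / b - 1 = (a - b) / b := by field_simp
  calc k * log a ≤ k * log b + k * ((a - b) / b) := by nlinarith
    _ = k * log b + k / b * (a - b) := by ring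

theorem logUtility_le_tangent (hk : 0 ≤ k) (ht : 0 < 1 + c * t) (ht₀ : 0 < 1 + c * t₀) :
    logUtility k c p t ≤ logUtility k c p t₀ + (k * c / (1 + c * t₀) - p) * (t - t₀) := by
  have h := mul_log_le_tangent hk ht ht₀
  have h' : k / (1 + c * t₀) * (1 + c * t - (1 + c * t₀)) = k * c / (1 + c * t₀) * (t - t₀) := by
    field_simp; ring
  unfold logUtility
  linarith

theorem logUtility_le_of_le_one (hk : 0 ≤ k) (hc : 0 ≤ c) (hp : p ≤ k * c / (1 + c))
    (ht : 0 ≤ t) (ht₁ : t ≤ 1) : logUtility k c p t ≤ logUtility k c p 1 := by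
  have h := logUtility_le_tangent (p := p) hk (by positivity : 0 < 1 + c * t)
    (by positivity : 0 < 1 + c * 1)
  rw [mul_one] at h
  nlinarith

theorem logUtility_le_argmax (hk : 0 < k) (hc : 0 < c) (hp : 0 < p) (ht : 0 ≤ t) :
    logUtility k c p t ≤ logUtility k c p (k / p - 1 / c) := by
  have hstat : 1 + c * (k / p - 1 / c) = k * c / p := by field_simp; ring
  have h := logUtility_le_tangent (p := p) hk.le (by positivity : 0 < 1 + c * t)
    (by rw [hstat]; positivity : 0 < 1 + c * (k / p - 1 / c))
  rwa [hstat, div_div_cancel₀ (by positivity), sub_self, zero_mul, add_zero] at h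

end logUtility

theorem desU_eq {X Y : ℝ} (ke kh pe ph C0 : ℝ) (hX : X ≠ 0) (hY : Y ≠ 0) (q : ℝ × ℝ) :
    desU X Y ke kh pe ph C0 q =
      logUtility ke (exp 1 - 1) (pe * X) q.1 + logUtility kh (exp 1 - 1) (ph * Y) q.2 - C0 := by
  simp only [desU, logUtility, div_mul_cancel₀ _ hX, div_mul_cancel₀ _ hY]
  ring

theorem stmt_8_general (X Y ke kh pe ph C0 Mmin βo : ℝ)
    (hX : 0 < X) (hY : 0 < Y) (hke : 0 < ke) (hkh : 0 < kh)
    (hph : 0 < ph)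
    (hβo : βo = (1 / Y) * (kh / ph - 1 / ((Real.exp 1 - 1) / Y)))
    (hmarg : ke * ((Real.exp 1 - 1) / X) / (1 + ((Real.exp 1 - 1) / X) * X) ≥ pe) :
    ∀ q ∈ desD X Y Mmin,
      desU X Y ke kh pe ph C0 q ≤ desU X Y ke kh pe ph C0 ((1:ℝ), βo) := by
  rintro ⟨α, β⟩ ⟨⟨hα0, hα1⟩, ⟨hβ0, -⟩, -⟩
  have hE : 0 < exp 1 - 1 := by linarith [add_one_lt_exp one_ne_zero]
  have hβo' : βo = kh / (ph * Y) - 1 / (exp 1 - 1) := by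
    rw [hβo]; field_simp
  have hmarg' : pe * X ≤ ke * (exp 1 - 1) / (1 + (exp 1 - 1)) := by
    rw [div_mul_cancel₀ _ hX.ne', ge_iff_le] at hmarg
    calc pe * X ≤ ke * ((exp 1 - 1) / X) / (1 + (exp 1 - 1)) * X := by gcongr
      _ = ke * (exp 1 - 1) / (1 + (exp 1 - 1)) := by field_simp
  rw [desU_eq ke kh pe ph C0 hX.ne' hY.ne', desU_eq ke kh pe ph C0 hX.ne' hY.ne', hβo']
  gcongr ?_ + ?_ - C0
  · exact logUtility_le_of_le_one hke.le hE.le hmarg' hα0 hα1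
  · exact logUtility_le_argmax hkh hE (by positivity) hβ0

/-- Case 2 of OP_DES: if the marginal utility of electricity at `α = 1` still
exceeds the offered price, `(1, β∘)` is a global maximizer of `U` on `D`. -/
theorem stmt_8 (X Y ke kh pe ph C0 Mmin βo : ℝ)
    (hX : 0 < X) (hY : 0 < Y) (hke : 0 < ke) (hkh : 0 < kh)
    (hpe : 0 < pe) (hph : 0 < ph)
    (hM : max X Y < Mmin) (hM' : Mmin < X + Y)
    (hβo : βo = (1 / Y) * (kh / ph - 1 / ((Real.exp 1 - 1) / Y)))
    (hmarg : ke * ((Real.exp 1 - 1) / X) / (1 + ((Real.exp 1 - 1) / X) * X) ≥ pe)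
    (hβ1 : 0 < βo) (hβ2 : βo < 1)
    (hfeas : X + Y * βo ≥ Mmin) :
    ∀ q ∈ desD X Y Mmin,
      desU X Y ke kh pe ph C0 q ≤ desU X Y ke kh pe ph C0 ((1:ℝ), βo) :=
  stmt_8_general X Y ke kh pe ph C0 Mmin βo hX hY hke hkh hph hβo hmarg
end

section
/- (Binding-constraint Case 1 of OP_DES via KKT.) Suppose λ is a real number with 0 < λ < p_e and λ < p_h, and set α◇ = (1/X)·(k_e/(p_e − λ) − 1/b_e) and β◇ = (1/Y)·(k_h/(p_h − λ) − 1/b_h). If 0 < α◇ < 1, 0 < β◇ < 1, and X·α◇ + Y·β◇ = M_min, then (α◇, β◇) is a global maximizer of U on the feasible set D: U(α◇, β◇) ≥ U(α,β) for all (α,β) ∈ D. -/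
/-!
With multiplier `λ`, the Lagrangian `U(α, β) + λ (X α + Y β - M_min)` separates into
`k_e log(1 + (e-1) α) - (p_e - λ) X α` plus the analogous term in `β`. Each is a concave
function of one variable whose derivative vanishes at `α◇` (resp. `β◇`), so the tangent-line
bound for `log` shows that `(α◇, β◇)` maximizes the Lagrangian over all `α, β ≥ 0`. Since the
constraint binds at `(α◇, β◇)` and `λ ≥ 0`, on `D` the utility is bounded by the Lagrangian,
which is at most its value at `(α◇, β◇)`, namely `U(α◇, β◇)`.
-/

open Real

lemma Real.log_sub_log_le_div {y y₀ : ℝ} (hy : 0 < y) (hy₀ : 0 < y₀) :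
    log y - log y₀ ≤ (y - y₀) / y₀ := by
  rw [← log_div hy.ne' hy₀.ne', sub_div, div_self hy₀.ne']
  exact log_le_sub_one_of_pos (div_pos hy hy₀)

lemma log_one_add_mul_sub_mul_le_of_stationary {k b c x x₀ : ℝ} (hk : 0 ≤ k)
    (hx : 0 < 1 + b * x) (hx₀ : 0 < 1 + b * x₀) (hstat : k * b = c * (1 + b * x₀)) :
    k * log (1 + b * x) - c * x ≤ k * log (1 + b * x₀) - c * x₀ := by
  have tangent : k * (log (1 + b * x) - log (1 + b * x₀)) ≤ c * (x - x₀) :=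
    calc k * (log (1 + b * x) - log (1 + b * x₀))
        ≤ k * ((1 + b * x - (1 + b * x₀)) / (1 + b * x₀)) :=
          mul_le_mul_of_nonneg_left (log_sub_log_le_div hx hx₀) hk
      _ = c * (x - x₀) := by field_simp; linear_combination (x - x₀) * hstat
  linarith

lemma one_add_mul_pos_of_stationary {k b c x₀ : ℝ} (hkb : 0 < k * b) (hc : 0 ≤ c)
    (hstat : k * b = c * (1 + b * x₀)) : 0 < 1 + b * x₀ :=
  pos_of_mul_pos_right (hstat ▸ hkb) hc

lemma stationary_of_eq_inv_mul_sub {X k p lam E x₀ : ℝ} (hX : X ≠ 0) (hE : E ≠ 0)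
    (hp : p - lam ≠ 0) (hx₀ : x₀ = (1 / X) * (k / (p - lam) - 1 / (E / X))) :
    k * E = X * (p - lam) * (1 + E * x₀) := by
  subst hx₀; field_simp; ring

theorem stmt_9_general (X Y ke kh pe ph C0 Mmin lam αd βd : ℝ)
    (hX : 0 < X) (hY : 0 < Y) (hke : 0 < ke) (hkh : 0 < kh)
    (hlam0 : 0 < lam) (hlam1 : lam < pe) (hlam2 : lam < ph)
    (hαd : αd = (1 / X) * (ke / (pe - lam) - 1 / ((Real.exp 1 - 1) / X)))
    (hβd : βd = (1 / Y) * (kh / (ph - lam) - 1 / ((Real.exp 1 - 1) / Y)))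
    (hbind : X * αd + Y * βd = Mmin) :
    ∀ q ∈ desD X Y Mmin,
      desU X Y ke kh pe ph C0 q ≤ desU X Y ke kh pe ph C0 (αd, βd) := by
  rintro ⟨α, β⟩ ⟨⟨hα, -⟩, ⟨hβ, -⟩, hcon⟩
  simp only [desU, div_mul_cancel₀ _ hX.ne', div_mul_cancel₀ _ hY.ne']
  set E := exp 1 - 1
  have hE : 0 < E := sub_pos.2 (one_lt_exp_iff.2 one_pos)
  have hpe_lam : 0 < pe - lam := sub_pos.2 hlam1
  have hph_lam : 0 < ph - lam := sub_pos.2 hlam2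
  have hstat_e := stationary_of_eq_inv_mul_sub hX.ne' hE.ne' hpe_lam.ne' hαd
  have hstat_h := stationary_of_eq_inv_mul_sub hY.ne' hE.ne' hph_lam.ne' hβd
  have max_e := log_one_add_mul_sub_mul_le_of_stationary (x := α) hke.le (by positivity)
    (one_add_mul_pos_of_stationary (mul_pos hke hE) (mul_pos hX hpe_lam).le hstat_e) hstat_e
  have max_h := log_one_add_mul_sub_mul_le_of_stationary (x := β) hkh.le (by positivity)
    (one_add_mul_pos_of_stationary (mul_pos hkh hE) (mul_pos hY hph_lam).le hstat_h) hstat_h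
  have slack : 0 ≤ lam * (X * α + Y * β - (X * αd + Y * βd)) :=
    mul_nonneg hlam0.le (by linarith)
  linarith

/-- Binding-constraint Case 1 of OP_DES via KKT: with a positive multiplier
`λ < p_e, p_h`, an interior KKT point `(α◇, β◇)` on the binding constraint is a
global maximizer of `U` on `D`. -/
theorem stmt_9 (X Y ke kh pe ph C0 Mmin lam αd βd : ℝ)
    (hX : 0 < X) (hY : 0 < Y) (hke : 0 < ke) (hkh : 0 < kh)
    (hpe : 0 < pe) (hph : 0 < ph)
    (hM : max X Y < Mmin) (hM' : Mmin < X + Y)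
    (hlam0 : 0 < lam) (hlam1 : lam < pe) (hlam2 : lam < ph)
    (hαd : αd = (1 / X) * (ke / (pe - lam) - 1 / ((Real.exp 1 - 1) / X)))
    (hβd : βd = (1 / Y) * (kh / (ph - lam) - 1 / ((Real.exp 1 - 1) / Y)))
    (hα1 : 0 < αd) (hα2 : αd < 1) (hβ1 : 0 < βd) (hβ2 : βd < 1)
    (hbind : X * αd + Y * βd = Mmin) :
    ∀ q ∈ desD X Y Mmin,
      desU X Y ke kh pe ph C0 q ≤ desU X Y ke kh pe ph C0 (αd, βd) :=
  stmt_9_general X Y ke kh pe ph C0 Mmin lam αd βd hX hY hke hkh hlam0 hlam1 hlam2 hαd hβd hbind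
end

section
/- (Concavity of the aggregator's profit, core of Lemma 1.) The electricity aggregator's profit function V_e(p) = (r_e − p)·Σ_{j=1}^n (X_j + 1/b_e^j − k_e^j/p) is strictly concave on the interval (0, ∞). -/
open Set

private lemma smul_strictConvexOn {s : Set ℝ} {f : ℝ → ℝ} (hf : StrictConvexOn ℝ s f)
    {c : ℝ} (hc : 0 < c) : StrictConvexOn ℝ s (fun x => c * f x) := by
  refine ⟨hf.1, fun x hx y hy hxy a b ha hb hab => ?_⟩
  have h := hf.2 hx hy hxy ha hb hab
  simp only [smul_eq_mul] at h ⊢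
  nlinarith

private lemma affine_concaveOn (C A : ℝ) :
    ConcaveOn ℝ (Set.Ioi (0:ℝ)) (fun p => C - A * p) := by
  refine ⟨convex_Ioi 0, fun x _ y _ a b ha hb hab => ?_⟩
  simp only [smul_eq_mul]
  have hb' : b = 1 - a := by linarith
  subst hb'
  apply le_of_eq
  ring

/-- The electricity aggregator's profit in the interior-response regime:
`V_e(p) = (r_e − p)·Σ_j (X_j + 1/b_e^j − k_e^j/p)` with `b_e^j = (e−1)/X_j`. -/
noncomputable def aggV (n : ℕ) (X k : Fin n → ℝ) (re p : ℝ) : ℝ :=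
  (re - p) * ∑ j, (X j + 1 / ((Real.exp 1 - 1) / X j) - k j / p)

/-- The aggregator's profit function is strictly concave on `(0, ∞)`. -/
theorem stmt_12 (n : ℕ) (hn : 1 ≤ n) (X k : Fin n → ℝ)
    (hX : ∀ j, 0 < X j) (hk : ∀ j, 0 < k j) (re : ℝ) (hre : 0 < re) :
    StrictConcaveOn ℝ (Set.Ioi (0:ℝ)) (aggV n X k re) := by
  set A : ℝ := ∑ j, (X j + 1 / ((Real.exp 1 - 1) / X j)) with hA
  set K : ℝ := ∑ j, k j with hK
  have hKpos : 0 < K := Finset.sum_pos (fun j _ => hk j) ⟨⟨0, hn⟩, Finset.mem_univ _⟩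
  have hcpos : 0 < re * K := mul_pos hre hKpos
  -- strict concavity of the model function g
  have hinv : StrictConvexOn ℝ (Set.Ioi (0:ℝ)) (fun x : ℝ => x ^ (-1 : ℤ)) :=
    strictConvexOn_zpow (by norm_num) (by norm_num)
  have hsc : StrictConcaveOn ℝ (Set.Ioi (0:ℝ))
      (fun p : ℝ => -(re * K * p ^ (-1 : ℤ))) :=
    (smul_strictConvexOn hinv hcpos).neg
  have hg : StrictConcaveOn ℝ (Set.Ioi (0:ℝ))
      (fun p : ℝ => -(re * K * p ^ (-1 : ℤ)) + (re * A + K - A * p)) :=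
    hsc.add_concaveOn (affine_concaveOn (re * A + K) A)
  -- aggV agrees with g on Ioi 0
  have heq : ∀ p ∈ Set.Ioi (0:ℝ),
      aggV n X k re p = -(re * K * p ^ (-1 : ℤ)) + (re * A + K - A * p) := by
    intro p hp
    have hp0 : (p:ℝ) ≠ 0 := ne_of_gt hp
    have hsum : ∑ j, (X j + 1 / ((Real.exp 1 - 1) / X j) - k j / p) = A - K / p := by
      rw [hA, hK, Finset.sum_sub_distrib, Finset.sum_div]
    unfold aggV
    rw [hsum, zpow_neg_one]
    field_simp
    ring
  refine ⟨convex_Ioi 0, fun x hx y hy hxy a b ha hb hab => ?_⟩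
  have hmem : a • x + b • y ∈ Set.Ioi (0:ℝ) :=
    (convex_Ioi 0) hx hy ha.le hb.le hab
  rw [heq _ hx, heq _ hy, heq _ hmem]
  exact hg.2 hx hy hxy ha hb hab
end

section
/- (Closed form of the aggregator's optimal unconstrained price.) Let S = Σ_{j=1}^n (X_j + 1/b_e^j) and K = Σ_{j=1}^n k_e^j. Then p̂ = √(r_e·K/S) is the unique global maximizer of V_e on (0, ∞): for every p > 0 with p ≠ p̂ one has V_e(p) < V_e(p̂). -/
/-!
Summing over the users, `V_e(p) = (r_e - p)(S - K/p)`. When `p̂² S = r_e K` this expands to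
`V_e(p̂) - V_e(p) = S (p - p̂)² / p`, which is positive for `p > 0`, `p ≠ p̂`.
-/

noncomputable def reducedProfit (r S K p : ℝ) : ℝ :=
  (r - p) * (S - K / p)

section reducedProfit

variable {r S K p q : ℝ}

theorem reducedProfit_sub_reducedProfit (hp : p ≠ 0) (hq : q ≠ 0) (hqSK : q ^ 2 * S = r * K) :
    reducedProfit r S K q - reducedProfit r S K p = S * (p - q) ^ 2 / p := by
  unfold reducedProfit
  field_simp
  linear_combination (p - q) * hqSK

theorem reducedProfit_lt_of_ne (hS : 0 < S) (hp : 0 < p) (hq : 0 < q)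
    (hqSK : q ^ 2 * S = r * K) (hpq : p ≠ q) :
    reducedProfit r S K p < reducedProfit r S K q := by
  have hgap := reducedProfit_sub_reducedProfit hp.ne' hq.ne' hqSK
  have : 0 < S * (p - q) ^ 2 / p := by
    have := sub_ne_zero.mpr hpq
    positivity
  linarith

theorem reducedProfit_lt_sqrt (hS : 0 < S) (hrK : 0 < r * K) (hp : 0 < p)
    (hp_ne : p ≠ √(r * K / S)) :
    reducedProfit r S K p < reducedProfit r S K √(r * K / S) := by
  have hquot : 0 < r * K / S := div_pos hrK hS
  refine reducedProfit_lt_of_ne hS hp (Real.sqrt_pos.mpr hquot) ?_ hp_ne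
  rw [Real.sq_sqrt hquot.le, div_mul_cancel₀ _ hS.ne']

end reducedProfit

theorem aggV_eq_reducedProfit (n : ℕ) (X k : Fin n → ℝ) (re p : ℝ) :
    aggV n X k re p =
      reducedProfit re (∑ j, (X j + 1 / ((Real.exp 1 - 1) / X j))) (∑ j, k j) p := by
  simp only [aggV, reducedProfit, Finset.sum_sub_distrib, Finset.sum_div]

/-- Closed form of the aggregator's optimal unconstrained price:
`p̂ = √(r_e·K/S)` is the unique global maximizer of `V_e` on `(0, ∞)`, where
`S = Σ_j (X_j + 1/b_e^j)` and `K = Σ_j k_e^j`. -/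
theorem stmt_13 (n : ℕ) (hn : 1 ≤ n) (X k : Fin n → ℝ)
    (hX : ∀ j, 0 < X j) (hk : ∀ j, 0 < k j) (re : ℝ) (hre : 0 < re)
    (S K phat : ℝ)
    (hS : S = ∑ j, (X j + 1 / ((Real.exp 1 - 1) / X j)))
    (hK : K = ∑ j, k j)
    (hphat : phat = Real.sqrt (re * K / S)) :
    ∀ p : ℝ, 0 < p → p ≠ phat → aggV n X k re p < aggV n X k re phat := by
  intro p hp hp_ne
  have hne : (Finset.univ : Finset (Fin n)).Nonempty := Finset.univ_nonempty_iff.mpr ⟨⟨0, hn⟩⟩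
  have he : 0 < Real.exp 1 - 1 := sub_pos.mpr (Real.one_lt_exp_iff.mpr one_pos)
  have hSpos : 0 < S := hS ▸ Finset.sum_pos (fun j _ => by
    have := hX j
    have := div_pos he (hX j)
    positivity) hne
  have hKpos : 0 < K := hK ▸ Finset.sum_pos (fun j _ => hk j) hne
  rw [aggV_eq_reducedProfit, aggV_eq_reducedProfit, ← hS, ← hK]
  subst hphat
  exact reducedProfit_lt_sqrt hSpos (mul_pos hre hKpos) hp hp_ne
end

section
/- (Optimal price on the admissible interval, equation (47).) Let S = Σ_{j=1}^n (X_j + 1/b_e^j), K = Σ_{j=1}^n k_e^j, p̂ = √(r_e·K/S), and let 0 < c_e ≤ r_e. Define the clamped price p̄ = min(r_e, max(c_e, p̂)). Then p̄ maximizes V_e over [c_e, r_e]: V_e(p̄) ≥ V_e(p) for every p with c_e ≤ p ≤ r_e. -/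
/-- Optimal price on the admissible interval (equation (47)): the clamped price
`p̄ = min(r_e, max(c_e, p̂))` maximizes `V_e` over `[c_e, r_e]`. -/
theorem stmt_14 (n : ℕ) (hn : 1 ≤ n) (X k : Fin n → ℝ)
    (hX : ∀ j, 0 < X j) (hk : ∀ j, 0 < k j) (re ce : ℝ)
    (hce : 0 < ce) (hcr : ce ≤ re)
    (S K phat pbar : ℝ)
    (hS : S = ∑ j, (X j + 1 / ((Real.exp 1 - 1) / X j)))
    (hK : K = ∑ j, k j)
    (hphat : phat = Real.sqrt (re * K / S))
    (hpbar : pbar = min re (max ce phat)) :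
    ∀ p : ℝ, ce ≤ p → p ≤ re → aggV n X k re p ≤ aggV n X k re pbar := by
  intro p hcp hpr
  have hne : (Finset.univ : Finset (Fin n)).Nonempty := by
    have : Nonempty (Fin n) := ⟨⟨0, hn⟩⟩
    exact Finset.univ_nonempty
  have he1 : (1 : ℝ) < Real.exp 1 := by
    have := Real.exp_one_gt_d9; linarith
  have hSpos : 0 < S := by
    rw [hS]
    apply Finset.sum_pos _ hne
    intro j _
    have hXj := hX j
    have : 0 < 1 / ((Real.exp 1 - 1) / X j) :=
      one_div_pos.mpr (div_pos (by linarith) hXj)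
    linarith
  have hKpos : 0 < K := by
    rw [hK]; exact Finset.sum_pos (fun j _ => hk j) hne
  have hphat0 : 0 ≤ phat := hphat ▸ Real.sqrt_nonneg _
  have hre : 0 < re := lt_of_lt_of_le hce hcr
  have hphatsq : S * (phat * phat) = re * K := by
    have hx : phat * phat = re * K / S := by
      rw [hphat]; exact Real.mul_self_sqrt (by positivity)
    rw [hx]; field_simp
  have hp : 0 < p := lt_of_lt_of_le hce hcp
  have hcb : ce ≤ pbar := by
    rw [hpbar]; exact le_min hcr (le_max_left _ _)
  have hbr : pbar ≤ re := by rw [hpbar]; exact min_le_left _ _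
  have hpb : 0 < pbar := lt_of_lt_of_le hce hcb
  -- key inequality
  have hkey : 0 ≤ (p - pbar) * (S * p * pbar - re * K) := by
    rcases le_total p pbar with h | h
    · rcases le_total phat ce with h2 | h2
      · have hbar : pbar = ce := by
          rw [hpbar, max_eq_left h2, min_eq_right hcr]
        have : p = pbar := le_antisymm h (hbar ▸ hcp)
        simp [this]
      · have hbar : pbar ≤ phat := by
          rw [hpbar, max_eq_right h2]; exact min_le_right _ _
        have hpp : p * pbar ≤ phat * phat :=
          mul_le_mul (le_trans h hbar) hbar (le_of_lt hpb) hphat0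
        have h3 : S * p * pbar - re * K ≤ 0 := by
          nlinarith [mul_le_mul_of_nonneg_left hpp hSpos.le]
        nlinarith [mul_nonneg (sub_nonneg.mpr h) (neg_nonneg.mpr h3)]
    · rcases le_total re (max ce phat) with h2 | h2
      · have hbar : pbar = re := by rw [hpbar, min_eq_left h2]
        have : p = pbar := le_antisymm (hbar ▸ hpr) h
        simp [this]
      · have hbar : phat ≤ pbar := by
          rw [hpbar, min_eq_right h2]; exact le_max_right _ _
        have hpp : phat * phat ≤ p * pbar :=
          mul_le_mul (le_trans hbar h) hbar hphat0 (le_of_lt hp)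
        have h3 : 0 ≤ S * p * pbar - re * K := by
          nlinarith [mul_le_mul_of_nonneg_left hpp hSpos.le]
        exact mul_nonneg (by linarith) h3
  -- rewrite aggV
  have hagg : ∀ q : ℝ, q ≠ 0 → aggV n X k re q = (re - q) * (S - K / q) := by
    intro q hq
    unfold aggV
    rw [hS, hK]
    congr 1
    rw [Finset.sum_sub_distrib, ← Finset.sum_div]
  rw [hagg p (ne_of_gt hp), hagg pbar (ne_of_gt hpb), ← sub_nonneg]
  have expand : (re - pbar) * (S - K / pbar) - (re - p) * (S - K / p)
      = (p - pbar) * (S * p * pbar - re * K) / (p * pbar) := by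
    field_simp; ring
  rw [expand]
  exact div_nonneg hkey (by positivity)
end
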